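/- For every w ∈ [0,1], the series ∑_{n=1}^∞ (n^{n-1}/n!) (w e^{-w})^n converges and equals w. -/

import Mathlib

/-!
For small `|w|`, expand each `exp (-(n + 1) w)` and sum the absolutely convergent double series
along antidiagonals: the coefficient of `w ^ (m + 1)` is `((m + 1)!)⁻¹ ∑ⱼ (-1) ^ (m + 1 - j)
(m + 1).choose j * j ^ m`, an `(m + 1)`-st forward difference of a polynomial of degree `m`,
hence `0` for `m ≥ 1`. Both sides of `T (w * exp (-w)) = w` are analytic on `(-1/4, 1)`, where
`|w * exp (-w)| < exp (-1)` stays inside the radius of convergence, so the identity propagates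
from a neighbourhood of `0`. At `w = 1` the terms are nonnegative and bounded by their limits as
`w ↑ 1`, which gives convergence to `1`.
-/

open Real Finset Filter Topology

theorem sum_antidiagonal_neg_one_pow_mul_choose_mul_pow {R : Type*} [CommRing R] {j n : ℕ}
    (h : j < n) : ∑ p ∈ antidiagonal n, (-1 : R) ^ p.2 * n.choose p.1 * (p.1 : R) ^ j = 0 := by
  have := congrFun (fwdDiff_iter_pow_eq_zero_of_lt (R := R) h) 0
  rw [fwdDiff_iter_eq_sum_shift] at this
  rw [Nat.sum_antidiagonal_eq_sum_range_succ (fun k l ↦ (-1 : R) ^ l * n.choose k * (k : R) ^ j)]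
  simpa [zsmul_eq_mul] using this

theorem Summable.hasSum_of_hasSum_antidiagonal {α A : Type*} [AddCommMonoid α] [TopologicalSpace α]
    [ContinuousAdd α] [T3Space α] [AddCommMonoid A] [HasAntidiagonal A] {F : A × A → α}
    (hF : Summable F) {a : A → α} {s : α} (hrow : ∀ n, HasSum (fun k ↦ F (n, k)) (a n))
    (hdiag : HasSum (fun m ↦ ∑ p ∈ antidiagonal m, F p) s) : HasSum a s := by
  have hsigma : HasSum (fun m ↦ ∑ p ∈ antidiagonal m, F p) (∑' p, F p) :=
    ((HasAntidiagonal.sigmaAntidiagonalEquivProd (A := A)).hasSum_iff.2 hF.hasSum).sigma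
      fun m ↦ by
        rw [← Finset.sum_coe_sort]
        exact hasSum_fintype (fun p : antidiagonal m ↦ F p)
  exact hdiag.unique hsigma ▸ hF.hasSum.prod_fiberwise hrow

theorem hasSum_of_tendsto_of_nonneg_of_le {ι β : Type*} {L : Filter ι} [L.NeBot]
    {f : ι → β → ℝ} {g : β → ℝ} {s : ι → ℝ} {l : ℝ}
    (hf : ∀ᶠ i in L, ∀ n, 0 ≤ f i n ∧ f i n ≤ g n)
    (hfg : ∀ n, Tendsto (fun i ↦ f i n) L (𝓝 (g n)))
    (hs : ∀ᶠ i in L, HasSum (f i) (s i)) (hsl : Tendsto s L (𝓝 l)) : HasSum g l := by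
  have hg0 : 0 ≤ g := fun n ↦ ge_of_tendsto (hfg n) (hf.mono fun i hi ↦ (hi n).1)
  have hbound (t : Finset β) : ∑ n ∈ t, g n ≤ l :=
    le_of_tendsto_of_tendsto (tendsto_finsetSum t fun n _ ↦ hfg n) hsl <|
      (hf.and hs).mono fun i ⟨hi, hsi⟩ ↦ sum_le_hasSum t (fun n _ ↦ (hi n).1) hsi
  have hg : Summable g := summable_of_sum_le hg0 hbound
  have hlow : l ≤ ∑' n, g n :=
    le_of_tendsto_of_tendsto hsl tendsto_const_nhds <|
      (hf.and hs).mono fun i ⟨hi, hsi⟩ ↦ hasSum_le (fun n ↦ (hi n).2) hsi hg.hasSum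
  exact le_antisymm (hg.tsum_le_of_sum_le hbound) hlow ▸ hg.hasSum

theorem Real.hasSum_pow_div_factorial (x : ℝ) : HasSum (fun n ↦ x ^ n / n.factorial) (exp x) :=
  Real.exp_eq_exp_ℝ ▸ NormedSpace.expSeries_div_hasSum_exp x

noncomputable section

-- The coefficient of `x ^ (n + 1)`, i.e. `m ^ (m - 1) / m!` for `m = n + 1`; the shift avoids
-- the truncated `0 - 1`.
def treeCoeff (n : ℕ) : ℝ := (n + 1 : ℝ) ^ n / (Nat.factorial (n + 1))

theorem treeCoeff_nonneg (n : ℕ) : 0 ≤ treeCoeff n := by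
  unfold treeCoeff; positivity

theorem treeCoeff_mul_neg_pow_div_factorial {n k m : ℕ} (h : n + k = m) :
    treeCoeff n * (-(n + 1 : ℝ)) ^ k / k.factorial
      = (-1) ^ k * (m + 1).choose (n + 1) * (n + 1 : ℝ) ^ m / (m + 1).factorial := by
  subst h
  have hchoose := Nat.choose_mul_factorial_mul_factorial (show n + 1 ≤ n + k + 1 by omega)
  rw [show n + k + 1 - (n + 1) = k by omega] at hchoose
  have hchoose' : ((n + k + 1).choose (n + 1) : ℝ) * (n + 1).factorial * k.factorial
      = (n + k + 1).factorial := by exact_mod_cast hchoose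
  unfold treeCoeff
  rw [neg_pow, pow_add]
  field_simp
  rw [← hchoose']
  ring

theorem sum_antidiagonal_treeCoeff_mul_neg_pow (m : ℕ) :
    ∑ p ∈ antidiagonal m, treeCoeff p.1 * (-(p.1 + 1 : ℝ)) ^ p.2 / p.2.factorial
      = if m = 0 then 1 else 0 := by
  rcases m with _ | m
  · simp [treeCoeff]
  have hdiff := sum_antidiagonal_neg_one_pow_mul_choose_mul_pow (R := ℝ) (lt_add_one (m + 1))
  rw [Nat.sum_antidiagonal_succ] at hdiff
  simp only [Nat.cast_zero, ne_eq, add_eq_zero, one_ne_zero, and_false, not_false_eq_true,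
    zero_pow, mul_zero, zero_add, Nat.cast_add, Nat.cast_one] at hdiff
  rw [if_neg m.succ_ne_zero, sum_congr rfl fun p hp ↦
    treeCoeff_mul_neg_pow_div_factorial (mem_antidiagonal.mp hp), ← sum_div, hdiff, zero_div]

theorem hasSum_treeCoeff_mul_exp (u v : ℝ) (n : ℕ) :
    HasSum (fun k ↦ treeCoeff n * u ^ (n + 1) * ((n + 1) * v) ^ k / k.factorial)
      (treeCoeff n * (u * exp v) ^ (n + 1)) := by
  rw [mul_pow, ← Real.exp_nat_mul, ← mul_assoc]
  push_cast
  simpa only [mul_div_assoc] using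
    (Real.hasSum_pow_div_factorial ((n + 1) * v)).mul_left (treeCoeff n * u ^ (n + 1))

def treeSeries : FormalMultilinearSeries ℝ ℝ ℝ := .ofScalars ℝ treeCoeff

def treeFunction (x : ℝ) : ℝ := x * treeSeries.sum x

theorem treeCoeff_mul_exp_neg_one_pow_le (n : ℕ) : treeCoeff n * exp (-1) ^ n ≤ exp 1 := by
  have hpow : treeCoeff n ≤ (n + 1 : ℝ) ^ (n + 1) / (n + 1).factorial := by
    unfold treeCoeff
    gcongr
    · linarith
    · omega
  have hexp : (n + 1 : ℝ) ^ (n + 1) / (n + 1).factorial ≤ exp 1 ^ (n + 1) := by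
    rw [← Real.exp_nat_mul, mul_one]
    exact_mod_cast le_hasSum (Real.hasSum_pow_div_factorial (n + 1 : ℕ)) (n + 1)
      fun k _ ↦ by positivity
  calc treeCoeff n * exp (-1) ^ n ≤ exp 1 ^ (n + 1) * exp (-1) ^ n := by
        gcongr; exact hpow.trans hexp
    _ = exp 1 := by rw [pow_succ', mul_assoc, ← mul_pow, ← Real.exp_add]; simp

theorem ofReal_exp_neg_one_le_radius_treeSeries :
    ENNReal.ofReal (exp (-1)) ≤ treeSeries.radius :=
  treeSeries.le_radius_of_bound (exp 1) fun n ↦ by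
    rw [treeSeries, FormalMultilinearSeries.ofScalars_norm, Real.norm_of_nonneg
      (treeCoeff_nonneg n), Real.coe_toNNReal _ (exp_pos _).le]
    exact treeCoeff_mul_exp_neg_one_pow_le n

theorem mem_eball_radius_treeSeries {x : ℝ} (hx : |x| < exp (-1)) :
    x ∈ Metric.eball 0 treeSeries.radius := by
  refine lt_of_lt_of_le ?_ ofReal_exp_neg_one_le_radius_treeSeries
  rw [edist_zero_right, enorm_eq_ofReal_abs]
  exact (ENNReal.ofReal_lt_ofReal_iff (exp_pos _)).2 hx

theorem hasSum_treeFunction {x : ℝ} (hx : |x| < exp (-1)) :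
    HasSum (fun n ↦ treeCoeff n * x ^ (n + 1)) (treeFunction x) := by
  have h := (treeSeries.hasSum (mem_eball_radius_treeSeries hx)).mul_left x
  simp only [treeSeries, FormalMultilinearSeries.ofScalars_apply_eq, smul_eq_mul] at h
  rw [funext fun n ↦ show treeCoeff n * x ^ (n + 1) = x * (treeCoeff n * x ^ n) by ring]
  exact h

theorem analyticAt_treeFunction {x : ℝ} (hx : |x| < exp (-1)) :
    AnalyticAt ℝ treeFunction x := by
  have hpos : 0 < treeSeries.radius :=
    lt_of_lt_of_le (ENNReal.ofReal_pos.2 (exp_pos _)) ofReal_exp_neg_one_le_radius_treeSeries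
  exact analyticAt_id.mul
    ((treeSeries.hasFPowerSeriesOnBall hpos).analyticAt_of_mem (mem_eball_radius_treeSeries hx))

theorem mul_exp_lt_exp_neg_one {u : ℝ} (h : u ≤ 1 / 4) : u * exp u < exp (-1) := by
  have hexp : exp u * (1 - u) ≤ 1 :=
    calc exp u * (1 - u) ≤ exp u * exp (-u) := by gcongr; linarith [add_one_le_exp (-u)]
      _ = 1 := by rw [← exp_add, add_neg_cancel, exp_zero]
  have hthird : 1 / 3 < exp (-1) := by
    rw [exp_neg, one_div]
    exact inv_strictAnti₀ (exp_pos 1) (by linarith [exp_one_lt_d9])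
  nlinarith [mul_nonneg (exp_pos u).le (by linarith : (0 : ℝ) ≤ 1 / 4 - u)]

theorem mul_exp_neg_lt_exp_neg_one {v : ℝ} (hv : v ≠ 1) : v * exp (-v) < exp (-1) := by
  have := add_one_lt_exp (sub_ne_zero.2 hv)
  calc v * exp (-v) < exp (v - 1) * exp (-v) := by gcongr; linarith
    _ = exp (-1) := by rw [← exp_add]; ring_nf

theorem abs_mul_exp_neg_lt_exp_neg_one {v : ℝ} (hv : v ∈ Set.Ioo (-1 / 4) 1) :
    |v * exp (-v)| < exp (-1) := by
  rcases le_or_gt 0 v with h0 | h0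
  · rw [abs_of_nonneg (by positivity)]
    exact mul_exp_neg_lt_exp_neg_one hv.2.ne
  · rw [abs_mul, abs_of_neg h0, abs_of_pos (exp_pos _)]
    exact mul_exp_lt_exp_neg_one (by linarith [hv.1])

theorem hasSum_treeCoeff_mul_exp_neg_of_abs_le {w : ℝ} (hw : |w| ≤ 1 / 4) :
    HasSum (fun n ↦ treeCoeff n * (w * exp (-w)) ^ (n + 1)) w := by
  set F : ℕ × ℕ → ℝ := fun p ↦
    treeCoeff p.1 * w ^ (p.1 + 1) * ((p.1 + 1) * -w) ^ p.2 / p.2.factorial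
  have hmajorant : Summable fun p : ℕ × ℕ ↦
      treeCoeff p.1 * |w| ^ (p.1 + 1) * ((p.1 + 1) * |w|) ^ p.2 / p.2.factorial := by
    refine (summable_prod_of_nonneg fun p ↦ ?_).2
      ⟨fun n ↦ (hasSum_treeCoeff_mul_exp _ _ n).summable, ?_⟩
    · have := treeCoeff_nonneg p.1; positivity
    · simp_rw [(hasSum_treeCoeff_mul_exp _ _ _).tsum_eq]
      refine (hasSum_treeFunction ?_).summable
      rw [abs_of_nonneg (by positivity)]
      exact mul_exp_lt_exp_neg_one hw
  have hF : Summable F := hmajorant.of_norm_bounded fun p ↦ by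
    simp only [F, norm_div, norm_mul, norm_pow, norm_neg, Real.norm_eq_abs,
      abs_of_nonneg (treeCoeff_nonneg _), Nat.abs_cast]
    rw [abs_of_nonneg (by positivity : (0 : ℝ) ≤ p.1 + 1)]
  refine hF.hasSum_of_hasSum_antidiagonal (fun n ↦ hasSum_treeCoeff_mul_exp w (-w) n) ?_
  have hdiag (m : ℕ) : ∑ p ∈ antidiagonal m, F p = if m = 0 then w else 0 := by
    have hfactor : ∑ p ∈ antidiagonal m, F p = w ^ (m + 1) *
        ∑ p ∈ antidiagonal m, treeCoeff p.1 * (-(p.1 + 1 : ℝ)) ^ p.2 / p.2.factorial := by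
      rw [mul_sum]
      refine sum_congr rfl fun p hp ↦ ?_
      rw [← mem_antidiagonal.mp hp]
      simp only [F, mul_neg, neg_pow (_ * w), neg_pow ((p.1 : ℝ) + 1), mul_pow, pow_add]
      ring
    rw [hfactor, sum_antidiagonal_treeCoeff_mul_neg_pow]
    split_ifs with hm <;> simp [hm]
  simpa only [hdiag] using hasSum_ite_eq 0 w

theorem treeFunction_mul_exp_neg {w : ℝ} (hw : w ∈ Set.Ioo (-1 / 4) 1) :
    treeFunction (w * exp (-w)) = w := by
  have hanalytic : AnalyticOnNhd ℝ (fun v ↦ treeFunction (v * exp (-v))) (Set.Ioo (-1 / 4) 1) :=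
    fun v hv ↦ (analyticAt_treeFunction (abs_mul_exp_neg_lt_exp_neg_one hv)).comp
      (f := fun v ↦ v * exp (-v)) (by fun_prop)
  have hnear : (fun v ↦ treeFunction (v * exp (-v))) =ᶠ[𝓝 0] id := by
    filter_upwards [Ioo_mem_nhds (by norm_num : (-1 / 4 : ℝ) < 0) (by norm_num : (0 : ℝ) < 1 / 4)]
      with v hv
    exact (hasSum_treeFunction (abs_mul_exp_neg_lt_exp_neg_one ⟨hv.1, by linarith [hv.2]⟩)).unique
      (hasSum_treeCoeff_mul_exp_neg_of_abs_le (abs_le.2 ⟨by linarith [hv.1], hv.2.le⟩))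
  exact hanalytic.eqOn_of_preconnected_of_eventuallyEq analyticOnNhd_id isPreconnected_Ioo
    (by norm_num) hnear hw

theorem hasSum_treeCoeff_mul_exp_neg {w : ℝ} (hw : w ∈ Set.Ioo (-1 / 4) 1) :
    HasSum (fun n ↦ treeCoeff n * (w * exp (-w)) ^ (n + 1)) w := by
  have := hasSum_treeFunction (abs_mul_exp_neg_lt_exp_neg_one hw)
  rwa [treeFunction_mul_exp_neg hw] at this

theorem hasSum_treeCoeff_mul_exp_neg_one :
    HasSum (fun n ↦ treeCoeff n * exp (-1) ^ (n + 1)) 1 := by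
  have hleft : Set.Ioo (0 : ℝ) 1 ∈ 𝓝[<] 1 := Ioo_mem_nhdsLT zero_lt_one
  refine hasSum_of_tendsto_of_nonneg_of_le (L := 𝓝[<] 1) (s := id)
    (f := fun v n ↦ treeCoeff n * (v * exp (-v)) ^ (n + 1)) ?_ (fun n ↦ ?_) ?_
    (tendsto_id.mono_left nhdsWithin_le_nhds)
  · filter_upwards [hleft] with v hv n
    have hc := treeCoeff_nonneg n
    have := hv.1
    exact ⟨by positivity, mul_le_mul_of_nonneg_left
      (pow_le_pow_left₀ (by positivity) (mul_exp_neg_le_exp_neg_one v) _) hc⟩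
  · simpa only [one_mul] using ((by fun_prop : Continuous fun v : ℝ ↦
      treeCoeff n * (v * exp (-v)) ^ (n + 1)).tendsto 1).mono_left nhdsWithin_le_nhds
  · filter_upwards [hleft] with v hv
    exact hasSum_treeCoeff_mul_exp_neg ⟨by linarith [hv.1], hv.2⟩

end

theorem euler_tree_identity (w : ℝ) (hw : w ∈ Set.Icc (0 : ℝ) 1) :
    HasSum (fun n : ℕ =>
      ((n + 1 : ℝ) ^ n / (Nat.factorial (n + 1))) * (w * Real.exp (-w)) ^ (n + 1)) w := by
  obtain ⟨hw0, hw1⟩ := hw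
  rcases hw1.lt_or_eq with hw1 | rfl
  · exact hasSum_treeCoeff_mul_exp_neg ⟨by linarith, hw1⟩
  · rw [one_mul]
    exact hasSum_treeCoeff_mul_exp_neg_one
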